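/- Fix a real number λ ≠ 0. For every integer n ≥ 0 and every real x, the ordinary falling factorial satisfies (x)_n = Σ_{m=0}^{n} G_{m,λ}(x) S_{2,λ}(n,m). -/

import Mathlib

/-! `e_λ^x(t)` solves `(1 + λt) y' = x y` and `log_λ(1+t)` solves `(1 + t) y' = 1 + λ y`, so by
the chain rule `e_λ^x(log_λ(1+t))` solves `(1 + t) y' = x y`, `y(0) = 1`, whose unique solution is
`e_1^x(t) = Σ (x)_n tⁿ/n!`. Expanding in powers of `log_λ(1+t)`, with
`log_λ(1+t)^k / k! = Σ_m s_{1,λ}(m,k) t^m/m!`, gives `(x)_n = Σ_k s_{1,λ}(n,k) (x)_{k,λ}` and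
`G_{m,λ}(x) = Σ_k s_{1,λ}(m,k) (x)_k`. Substituting the first into the definition of `S_{2,λ}`
and using the linear independence of the `(x)_{k,λ}` shows
`Σ_m S_{2,λ}(n,m) s_{1,λ}(m,k) = δ_{nk}`; the second then turns `Σ_m G_{m,λ}(x) S_{2,λ}(n,m)`
into `(x)_n`. -/

open Finset

/-- The degenerate falling factorial `(x)_{n,λ} = x(x−λ)⋯(x−(n−1)λ)`;
for `lam = 1` it is the ordinary falling factorial `(x)_n`. -/
noncomputable def dff (lam : ℝ) (n : ℕ) (x : ℝ) : ℝ :=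
  ∏ i ∈ Finset.range n, (x - i * lam)

/-- The degenerate exponential `e_λ^x(t) = Σ_{n≥0} (x)_{n,λ} t^n/n!`. -/
noncomputable def degExp (lam x : ℝ) : PowerSeries ℝ :=
  PowerSeries.mk fun n => dff lam n x / n.factorial

/-- The degenerate logarithm `log_λ(1+t) = Σ_{n≥1} λ^{n−1}(1)_{n,1/λ} t^n/n!`. -/
noncomputable def degLog (lam : ℝ) : PowerSeries ℝ :=
  PowerSeries.mk fun n =>
    if n = 0 then 0 else lam ^ (n - 1) * dff (1 / lam) n 1 / n.factorial

/-- Composition `f(g(t))` of formal power series (valid definition of composition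
when `g` has zero constant term, as in all uses below). -/
noncomputable def pscomp (f g : PowerSeries ℝ) : PowerSeries ℝ :=
  PowerSeries.mk fun n =>
    ∑ k ∈ Finset.range (n + 1), (PowerSeries.coeff (R := ℝ) k f) * (PowerSeries.coeff (R := ℝ) n (g ^ k))

open PowerSeries

lemma coeff_pow_eq_zero_of_lt {R : Type*} [CommSemiring R] {g : R⟦X⟧} (hg : constantCoeff g = 0)
    {n k : ℕ} (h : n < k) : coeff n (g ^ k) = 0 :=
  coeff_of_lt_order n <| (Nat.cast_lt.mpr h).trans_le (le_order_pow_of_constantCoeff_eq_zero k hg)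

lemma pscomp_eq_subst {f g : ℝ⟦X⟧} (hg : constantCoeff g = 0) : pscomp f g = f.subst g := by
  ext n
  rw [pscomp, coeff_mk, coeff_subst' (HasSubst.of_constantCoeff_zero' hg),
    finsum_eq_sum_of_support_subset (s := range (n + 1))]
  · simp only [smul_eq_mul]
  · intro k hk
    by_contra hkn
    simp only [coe_range, Set.mem_Iio, not_lt] at hkn
    exact hk (by simp [coeff_pow_eq_zero_of_lt hg (Nat.lt_of_succ_le hkn)])

lemma constantCoeff_degLog (lam : ℝ) : constantCoeff (degLog lam) = 0 := by
  simp [degLog, ← coeff_zero_eq_constantCoeff_apply]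

lemma constantCoeff_pscomp (f g : ℝ⟦X⟧) : constantCoeff (pscomp f g) = constantCoeff f := by
  rw [← coeff_zero_eq_constantCoeff_apply, pscomp, coeff_mk]
  simp

lemma dff_succ (lam : ℝ) (n : ℕ) (x : ℝ) : dff lam (n + 1) x = dff lam n x * (x - n * lam) :=
  prod_range_succ _ _

lemma coeff_X_mul_derivative {K : Type*} [CommSemiring K] (f : K⟦X⟧) (n : ℕ) :
    coeff n (X * d⁄dX K f) = n * coeff n f := by
  cases n with
  | zero => simp
  | succ n => rw [coeff_succ_X_mul, coeff_derivative, mul_comm]; push_cast; rfl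

lemma eq_of_one_add_X_mul_derivative_eq {K : Type*} [Field K] [CharZero K] {F G : K⟦X⟧} (a : K)
    (hF : (1 + X) * d⁄dX K F = C a * F) (hG : (1 + X) * d⁄dX K G = C a * G)
    (h0 : constantCoeff F = constantCoeff G) : F = G := by
  have recursion : ∀ {H : K⟦X⟧}, (1 + X) * d⁄dX K H = C a * H →
      ∀ n : ℕ, coeff (n + 1) H * (n + 1) = (a - n) * coeff n H := by
    intro H hH n
    have := congrArg (coeff n) hH
    rw [add_mul, one_mul, map_add, coeff_X_mul_derivative, coeff_derivative, coeff_C_mul] at this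
    linear_combination this
  ext n
  induction n with
  | zero => simpa using h0
  | succ n ih =>
    have hn : (n + 1 : K) ≠ 0 := by exact_mod_cast n.succ_ne_zero
    exact mul_right_cancel₀ hn (by rw [recursion hF, recursion hG, ih])

lemma degExp_ode (mu x : ℝ) :
    (1 + C mu * X) * d⁄dX ℝ (degExp mu x) = C x * degExp mu x := by
  ext n
  rw [add_mul, one_mul, map_add, mul_assoc, coeff_C_mul, coeff_C_mul, coeff_X_mul_derivative,
    coeff_derivative]
  simp only [degExp, coeff_mk, dff_succ, Nat.factorial_succ]
  push_cast
  field_simp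
  ring

lemma degLog_ode {lam : ℝ} (hlam : lam ≠ 0) :
    (1 + X) * d⁄dX ℝ (degLog lam) = 1 + C lam * degLog lam := by
  ext n
  rw [add_mul, one_mul, map_add, coeff_X_mul_derivative, coeff_derivative, map_add, coeff_C_mul]
  cases n with
  | zero => simp [degLog, dff]
  | succ n =>
    simp only [degLog, coeff_mk, coeff_one, dff_succ, Nat.factorial_succ,
      Nat.add_sub_cancel, n.succ_ne_zero, if_false]
    push_cast
    field_simp
    ring

lemma subst_C_mul {a : ℝ⟦X⟧} (ha : HasSubst a) (r : ℝ) (f : ℝ⟦X⟧) :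
    (C r * f).subst a = C r * f.subst a := by
  rw [← smul_eq_C_mul, subst_smul ha, smul_eq_C_mul]

lemma degExp_subst_degLog {lam : ℝ} (hlam : lam ≠ 0) (x : ℝ) :
    (degExp lam x).subst (degLog lam) = degExp 1 x := by
  have hL := HasSubst.of_constantCoeff_zero' (constantCoeff_degLog lam)
  have hsubst : (1 + C lam * X : ℝ⟦X⟧).subst (degLog lam) = 1 + C lam * degLog lam := by
    rw [subst_add hL, subst_C_mul hL, subst_X hL, ← map_one (C (R := ℝ)), subst_C]
    rfl
  refine eq_of_one_add_X_mul_derivative_eq x ?_ (by simpa using degExp_ode 1 x) ?_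
  · calc (1 + X) * d⁄dX ℝ ((degExp lam x).subst (degLog lam))
        = (d⁄dX ℝ (degExp lam x)).subst (degLog lam) * ((1 + X) * d⁄dX ℝ (degLog lam)) := by
          rw [derivative_subst hL]; ring
      _ = ((1 + C lam * X) * d⁄dX ℝ (degExp lam x)).subst (degLog lam) := by
          rw [degLog_ode hlam, subst_mul hL, hsubst, mul_comm]
      _ = C x * (degExp lam x).subst (degLog lam) := by
          rw [degExp_ode, subst_C_mul hL]
  · rw [← pscomp_eq_subst (constantCoeff_degLog lam), constantCoeff_pscomp,
      ← coeff_zero_eq_constantCoeff_apply, ← coeff_zero_eq_constantCoeff_apply]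
    simp [degExp, dff]

noncomputable def degStirling1 (lam : ℝ) (m k : ℕ) : ℝ :=
  m.factorial / k.factorial * coeff m (degLog lam ^ k)

lemma degStirling1_eq_zero_of_lt (lam : ℝ) {m k : ℕ} (h : m < k) :
    degStirling1 lam m k = 0 := by
  rw [degStirling1, coeff_pow_eq_zero_of_lt (constantCoeff_degLog lam) h, mul_zero]

lemma factorial_mul_coeff_pscomp_degExp_degLog (lam mu x : ℝ) (m : ℕ) :
    m.factorial * coeff m (pscomp (degExp mu x) (degLog lam)) =
      ∑ k ∈ range (m + 1), degStirling1 lam m k * dff mu k x := by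
  rw [pscomp, coeff_mk, mul_sum]
  refine sum_congr rfl fun k _ => ?_
  rw [degExp, coeff_mk, degStirling1]
  ring

lemma dff_one_eq_sum_degStirling1_mul_dff {lam : ℝ} (hlam : lam ≠ 0) (n : ℕ) (x : ℝ) :
    dff 1 n x = ∑ k ∈ range (n + 1), degStirling1 lam n k * dff lam k x := by
  rw [← factorial_mul_coeff_pscomp_degExp_degLog, pscomp_eq_subst (constantCoeff_degLog lam),
    degExp_subst_degLog hlam, degExp, coeff_mk]
  field_simp

lemma pscomp_degExp_pscomp_degLog {lam : ℝ} (hlam : lam ≠ 0) (x : ℝ) :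
    pscomp (degExp lam x) (pscomp (degLog lam) (degLog lam)) =
      pscomp (degExp 1 x) (degLog lam) := by
  have hL := constantCoeff_degLog lam
  have hL' := HasSubst.of_constantCoeff_zero' hL
  rw [pscomp_eq_subst (by rw [constantCoeff_pscomp, hL]), pscomp_eq_subst hL, pscomp_eq_subst hL,
    ← subst_comp_subst_apply hL' hL', degExp_subst_degLog hlam]

noncomputable def dffSeq (lam : ℝ) : Polynomial.Sequence ℝ where
  elems' n := ∏ i ∈ range n, (Polynomial.X - Polynomial.C (i * lam))
  degree_eq' n := by simp [Polynomial.degree_prod, -map_mul, Polynomial.degree_X_sub_C]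

lemma linearIndependent_dff (lam : ℝ) : LinearIndependent ℝ (fun k x => dff lam k x) := by
  let evalMap : Polynomial ℝ →ₗ[ℝ] ℝ → ℝ := LinearMap.pi Polynomial.leval
  have hker : LinearMap.ker evalMap = ⊥ :=
    LinearMap.ker_eq_bot'.mpr fun p hp =>
      Polynomial.funext fun x => by simpa [evalMap] using congrFun hp x
  have hdff : (fun k x => dff lam k x) = evalMap ∘ dffSeq lam := by
    funext k x
    simp [evalMap, dffSeq, dff, Polynomial.eval_prod]
  rw [hdff]
  exact (dffSeq lam).linearIndependent.map' evalMap hker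

lemma eq_of_forall_sum_mul_dff_eq {lam : ℝ} {N : ℕ} {a b : ℕ → ℝ}
    (h : ∀ x, ∑ k ∈ range N, a k * dff lam k x = ∑ k ∈ range N, b k * dff lam k x) :
    ∀ k < N, a k = b k := by
  intro k hk
  refine sub_eq_zero.mp (linearIndependent_iff'.mp (linearIndependent_dff lam) (range N)
    (fun k => a k - b k) ?_ k (mem_range.mpr hk))
  funext x
  simp [Finset.sum_apply, sub_mul, sum_sub_distrib, h x]

lemma sum_mul_sum_lowerTriangular {R : Type*} [CommSemiring R] {s : ℕ → ℕ → R}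
    (hs : ∀ m k, m < k → s m k = 0) (a f : ℕ → R) (n : ℕ) :
    ∑ m ∈ range (n + 1), a m * ∑ k ∈ range (m + 1), s m k * f k =
      ∑ k ∈ range (n + 1), (∑ m ∈ range (n + 1), a m * s m k) * f k := by
  have extend : ∀ m ∈ range (n + 1), ∑ k ∈ range (m + 1), s m k * f k =
      ∑ k ∈ range (n + 1), s m k * f k := by
    intro m hm
    refine sum_subset (range_subset_range.mpr (mem_range.mp hm)) ?_
    intro k _ hk
    rw [hs m k (by simpa using hk), zero_mul]
  rw [sum_congr rfl fun m hm => by rw [extend m hm]]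
  simp only [mul_sum, sum_mul, mul_assoc]
  exact sum_comm

lemma sum_stirling2_mul_degStirling1 {lam : ℝ} (hlam : lam ≠ 0) {S2 : ℕ → ℕ → ℝ}
    (hS2 : ∀ n x, dff lam n x = ∑ k ∈ range (n + 1), S2 n k * dff 1 k x)
    {n k : ℕ} (hk : k ≤ n) :
    ∑ m ∈ range (n + 1), S2 n m * degStirling1 lam m k = if k = n then 1 else 0 := by
  refine eq_of_forall_sum_mul_dff_eq (lam := lam) (b := fun k => if k = n then 1 else 0)
    (a := fun k => ∑ m ∈ range (n + 1), S2 n m * degStirling1 lam m k) (fun x => ?_)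
    k (Nat.lt_succ_of_le hk)
  rw [← sum_mul_sum_lowerTriangular (fun _ _ => degStirling1_eq_zero_of_lt lam)]
  simp [← dff_one_eq_sum_degStirling1_mul_dff hlam, ← hS2]

theorem falling_factorial_via_gaenari (lam : ℝ) (hlam : lam ≠ 0)
    (S2 : ℕ → ℕ → ℝ) (G : ℕ → ℝ → ℝ)
    (hS2 : ∀ (n : ℕ) (x : ℝ), dff lam n x = ∑ k ∈ Finset.range (n + 1), S2 n k * dff 1 k x)
    (hG : ∀ x : ℝ, pscomp (degExp lam x) (pscomp (degLog lam) (degLog lam)) = PowerSeries.mk (fun n => G n x / n.factorial))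
    : ∀ (n : ℕ) (x : ℝ), dff 1 n x = ∑ m ∈ Finset.range (n + 1), G m x * S2 n m := by
  intro n x
  have hGm : ∀ m, G m x = ∑ k ∈ range (m + 1), degStirling1 lam m k * dff 1 k x := by
    intro m
    rw [← factorial_mul_coeff_pscomp_degExp_degLog, ← pscomp_degExp_pscomp_degLog hlam, hG x,
      coeff_mk]
    field_simp
  calc dff 1 n x = ∑ k ∈ range (n + 1), (if k = n then 1 else 0) * dff 1 k x := by simp
    _ = ∑ k ∈ range (n + 1),
          (∑ m ∈ range (n + 1), S2 n m * degStirling1 lam m k) * dff 1 k x :=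
        sum_congr rfl fun k hk => by
          rw [sum_stirling2_mul_degStirling1 hlam hS2 (Nat.lt_succ_iff.mp (mem_range.mp hk))]
    _ = ∑ m ∈ range (n + 1), G m x * S2 n m := by
        rw [← sum_mul_sum_lowerTriangular (fun _ _ => degStirling1_eq_zero_of_lt lam)]
        simp only [hGm, mul_comm]
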